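/- arXiv:1008.0769 — 6 statements merged into one kernel-verified Lean document; each statement's English description precedes it below -/
import Mathlib

section
/- For any locally finite set φ in R^d with at least 2 points and any hard-core radius assignment (ρ'(x))_{x∈φ} (i.e. ρ'(x)+ρ'(y) ≤ |x−y| for all distinct x,y ∈ φ), the lilypond radii dominate lexicographically: if φ is finite with n elements and the lilypond radii listed in ascending order are ρ_1 ≤ ... ≤ ρ_n, and ρ'_1 ≤ ... ≤ ρ'_n are the ascending-ordered values of any other hard-core system, then (ρ_1,...,ρ_n) ≥ (ρ'_1,...,ρ'_n) in the lexicographic order on R^n. -/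
open Metric

private lemma filter_card_eq_of_enum {n : ℕ} {α : Type*} [DecidableEq α] (φ : Finset α)
    (e : Fin n → α) (heinj : Function.Injective e)
    (herange : ∀ x, x ∈ φ ↔ ∃ i, e i = x) (p : α → Prop) [DecidablePred p] :
    (φ.filter p).card = (Finset.univ.filter (fun i => p (e i))).card := by
  have hφ : φ = Finset.univ.image e := by
    ext x; simp [herange, eq_comm]
  rw [hφ, Finset.filter_image, Finset.card_image_of_injective _ heinj]

/-- **Lexicographic maximality of the lilypond radii.**
If `φ` is a finite set of `n ≥ 2` points in `ℝ^d`, `ρ` is the lilypond radius system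
(hard-core + smaller grain-neighbour properties), `ρ'` is any other hard-core system,
and `e, e'` enumerate `φ` so that the corresponding radii are listed in ascending order,
then the ascending list of `ρ'`-values is lexicographically at most that of the `ρ`-values. -/
theorem lilypond_lex_maximal {d n : ℕ} (hn : 2 ≤ n)
    (φ : Finset (EuclideanSpace ℝ (Fin d))) (hcard : φ.card = n)
    (ρ ρ' : EuclideanSpace ℝ (Fin d) → ℝ)
    (hρpos : ∀ x ∈ φ, 0 < ρ x)
    (hhc : ∀ x ∈ φ, ∀ y ∈ φ, x ≠ y → ρ x + ρ y ≤ dist x y)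
    (hsgn : ∀ x ∈ φ, ∃ y ∈ φ, y ≠ x ∧ ρ x + ρ y = dist x y ∧ ρ y ≤ ρ x)
    (hhc' : ∀ x ∈ φ, ∀ y ∈ φ, x ≠ y → ρ' x + ρ' y ≤ dist x y)
    (e e' : Fin n → EuclideanSpace ℝ (Fin d))
    (heinj : Function.Injective e) (he'inj : Function.Injective e')
    (herange : ∀ x, x ∈ φ ↔ ∃ i, e i = x)
    (he'range : ∀ x, x ∈ φ ↔ ∃ i, e' i = x)
    (hmono : Monotone (fun i => ρ (e i))) (hmono' : Monotone (fun i => ρ' (e' i))) :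
    toLex (fun i => ρ' (e' i)) ≤ toLex (fun i => ρ (e i)) := by
  classical
  rcases (@trichotomous_of _ _ (Pi.isTrichotomous_lex (· < ·) (fun {_} => ((· < ·) : ℝ → ℝ → Prop))
      (wellFounded_lt (α := Fin n))))
      (fun i => ρ' (e' i)) (fun i => ρ (e i)) with h | h | h
  · exact le_of_lt h
  · exact le_of_eq (congrArg toLex h)
  exfalso
  obtain ⟨k, hk_eq, hk_lt⟩ : ∃ k : Fin n, (∀ j, j < k → ρ (e j) = ρ' (e' j)) ∧
      ρ (e k) < ρ' (e' k) := h
  set r : ℝ := ρ (e k) with hr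
  have hek : e k ∈ φ := (herange (e k)).2 ⟨k, rfl⟩
  have hmem : ∀ i : Fin n, e i ∈ φ := fun i => (herange (e i)).2 ⟨i, rfl⟩
  have hmem' : ∀ i : Fin n, e' i ∈ φ := fun i => (he'range (e' i)).2 ⟨i, rfl⟩
  -- counting lemma at thresholds t < r
  have hcount : ∀ t : ℝ, t < r →
      (φ.filter (fun x => ρ x ≤ t)).card = (φ.filter (fun x => ρ' x ≤ t)).card := by
    intro t ht
    rw [filter_card_eq_of_enum φ e heinj herange,
        filter_card_eq_of_enum φ e' he'inj he'range]
    congr 1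
    apply Finset.filter_congr
    intro i _
    constructor
    · intro hi
      have hik : i < k := by
        by_contra hik
        exact absurd (le_trans (hmono (not_lt.1 hik)) hi) (not_le.2 ht)
      rw [← hk_eq i hik]; exact hi
    · intro hi
      have hik : i < k := by
        by_contra hik
        have : ρ' (e' k) ≤ ρ' (e' i) := hmono' (not_lt.1 hik)
        have : r < t := lt_of_lt_of_le (lt_of_lt_of_le hk_lt this) hi
        exact absurd ht (not_lt.2 this.le)
      rw [hk_eq i hik]; exact hi
  -- find z ∈ φ with ρ z ≤ r < ρ' z
  obtain ⟨z, hzφ, hzρ, hzρ'⟩ : ∃ z ∈ φ, ρ z ≤ r ∧ r < ρ' z := by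
    by_contra hno
    push_neg at hno
    have hsub : φ.filter (fun x => ρ x ≤ r) ⊆ φ.filter (fun x => ρ' x ≤ r) := by
      intro x hx
      rw [Finset.mem_filter] at hx ⊢
      exact ⟨hx.1, hno x hx.1 hx.2⟩
    have h1 : k.val + 1 ≤ (φ.filter (fun x => ρ x ≤ r)).card := by
      rw [filter_card_eq_of_enum φ e heinj herange]
      have : (Finset.univ.filter (fun i : Fin n => i ≤ k)).card
          ≤ (Finset.univ.filter (fun i : Fin n => ρ (e i) ≤ r)).card := by
        apply Finset.card_le_card
        intro i hi
        rw [Finset.mem_filter] at hi ⊢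
        exact ⟨Finset.mem_univ _, hmono hi.2⟩
      refine le_trans ?_ this
      have : (Finset.univ.filter (fun i : Fin n => i ≤ k)).card = k.val + 1 := by
        have : Finset.univ.filter (fun i : Fin n => i ≤ k) = Finset.Iic k := by
          ext i; simp
        rw [this, Fin.card_Iic]
      omega
    have h2 : (φ.filter (fun x => ρ' x ≤ r)).card ≤ k.val := by
      rw [filter_card_eq_of_enum φ e' he'inj he'range]
      have hsub2 : Finset.univ.filter (fun i : Fin n => ρ' (e' i) ≤ r)
          ⊆ Finset.univ.filter (fun i : Fin n => i < k) := by
        intro i hi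
        rw [Finset.mem_filter] at hi ⊢
        refine ⟨Finset.mem_univ _, ?_⟩
        by_contra hik
        have : ρ' (e' k) ≤ ρ' (e' i) := hmono' (not_lt.1 hik)
        exact absurd (le_trans this hi.2) (not_le.2 hk_lt)
      have := Finset.card_le_card hsub2
      have hlt : (Finset.univ.filter (fun i : Fin n => i < k)).card = k.val := by
        have : Finset.univ.filter (fun i : Fin n => i < k) = Finset.Iio k := by
          ext i; simp
        rw [this, Fin.card_Iio]
      omega
    have := Finset.card_le_card hsub
    omega
  -- the set W of points where ρ' < ρ is nonempty
  obtain ⟨y, hyφ, hyz, hyd, hyr⟩ := hsgn z hzφ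
  have hyW : ρ' y < ρ y := by
    have h1 : ρ' z + ρ' y ≤ dist z y := hhc' z hzφ y hyφ (Ne.symm hyz)
    have h2 : ρ z + ρ y = dist z y := hyd
    nlinarith
  set W := φ.filter (fun x => ρ' x < ρ x) with hW
  have hWne : W.Nonempty := ⟨y, Finset.mem_filter.2 ⟨hyφ, hyW⟩⟩
  obtain ⟨y₀, hy₀W, hy₀min⟩ := W.exists_min_image ρ' hWne
  have hy₀φ : y₀ ∈ φ := (Finset.mem_filter.1 hy₀W).1
  have hy₀lt : ρ' y₀ < ρ y₀ := (Finset.mem_filter.1 hy₀W).2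
  set u : ℝ := ρ' y₀ with hu
  have hur : u < r := by
    have h1 : ρ' y₀ ≤ ρ' y := hy₀min y (Finset.mem_filter.2 ⟨hyφ, hyW⟩)
    calc u = ρ' y₀ := rfl
      _ ≤ ρ' y := h1
      _ < ρ y := hyW
      _ ≤ ρ z := hyr
      _ ≤ r := hzρ
  have hcu := hcount u hur
  -- find x₀ with ρ x₀ ≤ u < ρ' x₀
  obtain ⟨x₀, hx₀φ, hx₀ρ, hx₀ρ'⟩ : ∃ x₀ ∈ φ, ρ x₀ ≤ u ∧ u < ρ' x₀ := by
    by_contra hno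
    push_neg at hno
    have hsub : φ.filter (fun x => ρ x ≤ u) ⊆ φ.filter (fun x => ρ' x ≤ u) := by
      intro x hx
      rw [Finset.mem_filter] at hx ⊢
      exact ⟨hx.1, hno x hx.1 hx.2⟩
    have heq : φ.filter (fun x => ρ x ≤ u) = φ.filter (fun x => ρ' x ≤ u) :=
      Finset.eq_of_subset_of_card_le hsub (le_of_eq hcu.symm)
    have : y₀ ∈ φ.filter (fun x => ρ x ≤ u) := by
      rw [heq, Finset.mem_filter]
      exact ⟨hy₀φ, le_refl _⟩
    have := (Finset.mem_filter.1 this).2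
    exact absurd hy₀lt (not_lt.2 (le_trans this (le_refl u)))
  -- descent: x₀'s neighbour contradicts minimality of u
  obtain ⟨y₁, hy₁φ, hy₁x, hy₁d, hy₁r⟩ := hsgn x₀ hx₀φ
  have hy₁W : ρ' y₁ < ρ y₁ := by
    have h1 : ρ' x₀ + ρ' y₁ ≤ dist x₀ y₁ := hhc' x₀ hx₀φ y₁ hy₁φ (Ne.symm hy₁x)
    nlinarith
  have hy₁u : ρ' y₁ < u := lt_of_lt_of_le hy₁W (le_trans hy₁r hx₀ρ)
  have := hy₀min y₁ (Finset.mem_filter.2 ⟨hy₁φ, hy₁W⟩)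
  exact absurd hy₁u (not_lt.2 this)
end

section
/- Fence confinement lemma: Suppose 0 < r < s with s ≥ 2r, x ∈ R^d, and φ ⊂ R^d is locally finite with lilypond radii ρ(·,φ). Suppose there are points y_1,...,y_k ∈ ∂B_s(x) with ∂B_s(x) ⊂ ∪_i B^o_r(y_i), and for each i the set φ ∩ (B^o_r(y_i) \ B_s(x)) has at least 2 points. Then: (a) for any z ∈ φ \ B^o_s(x), the ball B_{ρ(z,φ)}(z) does not intersect B_{s−2r}(x); (b) for any y ∈ φ ∩ B_s(x), the ball B_{ρ(y,φ)}(y) is contained in B^o_{s+2r}(x). -/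
open Metric

lemma fence_ray_point {E : Type*} [NormedAddCommGroup E] [NormedSpace ℝ E]
    (x z : E) (t : ℝ) (ht : 0 ≤ t) (h : x ≠ z) :
    ∃ p, dist x p = t ∧ dist z p = |dist x z - t| := by
  set c := dist x z with hc
  have hcpos : 0 < c := dist_pos.2 h
  refine ⟨x + (t / c) • (z - x), ?_, ?_⟩
  · rw [dist_self_add_right, norm_smul, Real.norm_eq_abs,
      abs_of_nonneg (div_nonneg ht hcpos.le)]
    rw [show ‖z - x‖ = dist x z from (dist_eq_norm x z ▸ norm_sub_rev z x), ← hc]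
    field_simp
  · have heq : z - (x + (t / c) • (z - x)) = (1 - t / c) • (z - x) := by
      rw [sub_smul, one_smul]; abel
    rw [dist_eq_norm, heq, norm_smul, Real.norm_eq_abs,
      show ‖z - x‖ = dist x z from (dist_eq_norm x z ▸ norm_sub_rev z x), ← hc]
    rw [show (1 : ℝ) - t / c = (c - t) / c by field_simp, abs_div,
      abs_of_pos hcpos]
    field_simp

/-- **Fence confinement lemma.**
Let `0 < r < s` with `s ≥ 2r`, let `φ ⊂ ℝ^d` carry radii `ρ` with the hard-core property
and `ρ z ≤ D(z,φ)` (nearest-neighbour distance bound), and suppose points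
`y_1, …, y_k ∈ ∂B_s(x)` are such that their open `r`-balls cover `∂B_s(x)` and each
`B^o_r(y_i) \ B_s(x)` contains at least two points of `φ` (a *fence*). Then:
(a) for `z ∈ φ` outside `B^o_s(x)`, the grain `B_{ρ z}(z)` misses `B_{s-2r}(x)`;
(b) for `y ∈ φ ∩ B_s(x)`, the grain `B_{ρ y}(y)` is contained in `B^o_{s+2r}(x)`. -/
theorem fence_confinement {d : ℕ} (φ : Set (EuclideanSpace ℝ (Fin d)))
    (ρ : EuclideanSpace ℝ (Fin d) → ℝ) (r s : ℝ) (x : EuclideanSpace ℝ (Fin d))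
    (hr : 0 < r) (hrs : r < s) (h2r : 2 * r ≤ s)
    (hρpos : ∀ z ∈ φ, 0 < ρ z)
    (hhc : ∀ u ∈ φ, ∀ v ∈ φ, u ≠ v → ρ u + ρ v ≤ dist u v)
    (hρD : ∀ z ∈ φ, ∀ w ∈ φ, w ≠ z → ρ z ≤ dist z w)
    (k : ℕ) (y : Fin k → EuclideanSpace ℝ (Fin d))
    (hy : ∀ i, dist x (y i) = s)
    (hcover : sphere x s ⊆ ⋃ i, ball (y i) r)
    (hfence : ∀ i, ∃ a ∈ φ, ∃ b ∈ φ, a ≠ b ∧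
        a ∈ ball (y i) r \ closedBall x s ∧ b ∈ ball (y i) r \ closedBall x s) :
    (∀ z ∈ φ, z ∉ ball x s →
        Disjoint (closedBall z (ρ z)) (closedBall x (s - 2 * r))) ∧
    (∀ w ∈ φ, w ∈ closedBall x s → closedBall w (ρ w) ⊆ ball x (s + 2 * r)) := by
  have hs : 0 < s := hr.trans hrs
  rcases subsingleton_or_nontrivial (EuclideanSpace ℝ (Fin d)) with hsub | hnt
  · constructor
    · intro z hz hzb
      exact (hzb (by rw [Subsingleton.elim z x]; exact mem_ball_self hs)).elim
    · intro w hw hwφ q hq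
      have : q = x := Subsingleton.elim q x
      rw [this]
      exact mem_ball_self (by linarith)
  -- key: near any point of the sphere there is a fence point of φ (avoiding a given z)
  have key : ∀ p : EuclideanSpace ℝ (Fin d), dist x p = s →
      ∀ z : EuclideanSpace ℝ (Fin d), ∃ a ∈ φ, a ≠ z ∧ s < dist x a ∧ dist p a < 2 * r := by
    intro p hp z
    have hps : p ∈ sphere x s := by rw [mem_sphere, dist_comm]; exact hp
    obtain ⟨_, ⟨i, rfl⟩, hpi⟩ := hcover hps
    obtain ⟨a, ha, b, hb, hab, ⟨har, hax⟩, ⟨hbr, hbx⟩⟩ := hfence i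
    have hda : dist p a < 2 * r := by
      calc dist p a ≤ dist p (y i) + dist (y i) a := dist_triangle _ _ _
        _ < r + r := by
            have := mem_ball.mp hpi
            have := mem_ball.mp har
            rw [dist_comm (y i) a]; linarith
        _ = 2 * r := by ring
    have hdb : dist p b < 2 * r := by
      calc dist p b ≤ dist p (y i) + dist (y i) b := dist_triangle _ _ _
        _ < r + r := by
            have := mem_ball.mp hpi
            have := mem_ball.mp hbr
            rw [dist_comm (y i) b]; linarith
        _ = 2 * r := by ring
    have haxs : s < dist x a := by
      have := mem_closedBall.not.mp hax; rw [dist_comm]; linarith [not_le.mp this]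
    have hbxs : s < dist x b := by
      have := mem_closedBall.not.mp hbx; rw [dist_comm]; linarith [not_le.mp this]
    by_cases haz : a = z
    · exact ⟨b, hb, fun hbz => hab (by rw [haz, hbz]), hbxs, hdb⟩
    · exact ⟨a, ha, haz, haxs, hda⟩
  constructor
  · -- part (a)
    intro z hz hzb
    have hdz : s ≤ dist x z := by
      rw [mem_ball, not_lt] at hzb; rwa [dist_comm]
    have hxz : x ≠ z := fun h => by rw [← h, dist_self] at hdz; linarith
    obtain ⟨p, hp1, hp2⟩ := fence_ray_point x z s hs.le hxz
    rw [abs_of_nonneg (by linarith)] at hp2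
    obtain ⟨a, ha, haz, haxs, hda⟩ := key p hp1 z
    have hρz : ρ z < dist x z - s + 2 * r := by
      have h1 : ρ z ≤ dist z a := hρD z hz a ha haz
      have h2 : dist z a ≤ dist z p + dist p a := dist_triangle _ _ _
      rw [hp2] at h2; linarith
    rw [Set.disjoint_left]
    intro q hq1 hq2
    have hq1' : dist q z ≤ ρ z := mem_closedBall.mp hq1
    have hq2' : dist q x ≤ s - 2 * r := mem_closedBall.mp hq2
    have : dist x z ≤ dist x q + dist q z := dist_triangle _ _ _
    rw [dist_comm x q] at this
    linarith
  · -- part (b)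
    intro w hw hwb q hq
    have hdw : dist w x ≤ s := mem_closedBall.mp hwb
    have hp : ∃ p, dist x p = s ∧ dist w p ≤ s - dist x w := by
      by_cases hxw : x = w
      · obtain ⟨p, hp⟩ : (sphere x s).Nonempty := NormedSpace.sphere_nonempty.mpr hs.le
        have hxp : dist x p = s := by rw [dist_comm]; exact mem_sphere.mp hp
        exact ⟨p, hxp, by rw [← hxw, dist_self, sub_zero]; exact hxp.le⟩
      · obtain ⟨p, hp1, hp2⟩ := fence_ray_point x w s hs.le hxw
        refine ⟨p, hp1, ?_⟩
        rw [hp2, abs_of_nonpos (by rw [dist_comm] at hdw; linarith), neg_sub]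
    obtain ⟨p, hp1, hp2⟩ := hp
    obtain ⟨a, ha, haw, haxs, hda⟩ := key p hp1 w
    have hρw : ρ w < s - dist x w + 2 * r := by
      have h1 : ρ w ≤ dist w a := hρD w hw a ha haw
      have h2 : dist w a ≤ dist w p + dist p a := dist_triangle _ _ _
      linarith
    have hq' : dist q w ≤ ρ w := mem_closedBall.mp hq
    rw [mem_ball]
    have : dist q x ≤ dist q w + dist w x := dist_triangle _ _ _
    rw [dist_comm x w] at hρw
    linarith
end

section
/- Double fence separation: Let 0 < r, s ≥ 2r, t ≥ s + 4r, x ∈ R^d, and let φ, ψ be locally finite sets with hard-core radii ρ(·,φ), ρ(·,ψ) satisfying ρ(z,·) ≤ D(z,·). Suppose φ has a fence at radius s around x (i.e. every point of ∂B_s(x) is within open distance r of a point y_i with at least 2 points of φ in B^o_r(y_i) \ B_s(x)) and ψ has a fence at radius t around x. Then for any y ∈ φ ∩ B_s(x) and z ∈ ψ \ B_t(x), |y − z| > ρ(y,φ) + ρ(z,ψ). -/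
open Metric

lemma dfs_aux {d : ℕ} {x c : EuclideanSpace ℝ (Fin d)} (hne : c ≠ x) (s : ℝ) (hs : 0 ≤ s) :
    ∃ p, dist x p = s ∧ dist c p = |dist x c - s| := by
  set u := c - x with hu
  have hu0 : ‖u‖ ≠ 0 := by
    simp only [hu, norm_ne_zero_iff, sub_ne_zero]
    exact hne
  have hupos : 0 < ‖u‖ := lt_of_le_of_ne (norm_nonneg _) (Ne.symm hu0)
  refine ⟨x + (s / ‖u‖) • u, ?_, ?_⟩
  · have : dist x (x + (s / ‖u‖) • u) = ‖(s / ‖u‖) • u‖ := by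
      rw [dist_eq_norm]; simp
    rw [this, norm_smul]
    rw [Real.norm_eq_abs, abs_div, abs_of_nonneg hs, abs_of_pos hupos]
    field_simp
  · have h1 : c - (x + (s / ‖u‖) • u) = (1 - s / ‖u‖) • u := by
      rw [sub_smul, one_smul, hu]; abel
    rw [dist_eq_norm, h1, norm_smul, Real.norm_eq_abs]
    have h2 : dist x c = ‖u‖ := by rw [dist_eq_norm, hu, norm_sub_rev]
    have h3 : |1 - s / ‖u‖| * ‖u‖ = |(1 - s / ‖u‖) * ‖u‖| := by
      rw [abs_mul, abs_of_pos hupos]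
    have h4 : (1 - s / ‖u‖) * ‖u‖ = ‖u‖ - s := by field_simp
    rw [h2, h3, h4]

/-- **Double fence separation.**
Let `0 < r`, `s ≥ 2r`, `t ≥ s + 4r`, `x ∈ ℝ^d`, and let `φ, ψ` carry hard-core radii
`ρφ, ρψ` bounded by the respective nearest-neighbour distances. If `φ` has a fence at
radius `s` around `x` and `ψ` has a fence at radius `t` around `x`, then for any
`y ∈ φ ∩ B_s(x)` and `z ∈ ψ \ B_t(x)` one has `|y - z| > ρφ(y) + ρψ(z)`. -/
theorem double_fence_separation {d : ℕ}
    (φ ψ : Set (EuclideanSpace ℝ (Fin d)))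
    (ρφ ρψ : EuclideanSpace ℝ (Fin d) → ℝ)
    (r s t : ℝ) (x : EuclideanSpace ℝ (Fin d))
    (hr : 0 < r) (hs : 2 * r ≤ s) (ht : s + 4 * r ≤ t)
    (hρφpos : ∀ z ∈ φ, 0 < ρφ z)
    (hρψpos : ∀ z ∈ ψ, 0 < ρψ z)
    (hhcφ : ∀ u ∈ φ, ∀ v ∈ φ, u ≠ v → ρφ u + ρφ v ≤ dist u v)
    (hhcψ : ∀ u ∈ ψ, ∀ v ∈ ψ, u ≠ v → ρψ u + ρψ v ≤ dist u v)
    (hρφD : ∀ z ∈ φ, ∀ w ∈ φ, w ≠ z → ρφ z ≤ dist z w)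
    (hρψD : ∀ z ∈ ψ, ∀ w ∈ ψ, w ≠ z → ρψ z ≤ dist z w)
    -- fence for φ at radius s
    (kφ : ℕ) (yφ : Fin kφ → EuclideanSpace ℝ (Fin d))
    (hyφ : ∀ i, dist x (yφ i) = s)
    (hcovφ : sphere x s ⊆ ⋃ i, ball (yφ i) r)
    (hfenceφ : ∀ i, ∃ a ∈ φ, ∃ b ∈ φ, a ≠ b ∧
        a ∈ ball (yφ i) r \ closedBall x s ∧ b ∈ ball (yφ i) r \ closedBall x s)
    -- fence for ψ at radius t
    (kψ : ℕ) (yψ : Fin kψ → EuclideanSpace ℝ (Fin d))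
    (hyψ : ∀ i, dist x (yψ i) = t)
    (hcovψ : sphere x t ⊆ ⋃ i, ball (yψ i) r)
    (hfenceψ : ∀ i, ∃ a ∈ ψ, ∃ b ∈ ψ, a ≠ b ∧
        a ∈ ball (yψ i) r \ closedBall x t ∧ b ∈ ball (yψ i) r \ closedBall x t)
    (y : EuclideanSpace ℝ (Fin d)) (hy : y ∈ φ) (hyB : y ∈ closedBall x s)
    (z : EuclideanSpace ℝ (Fin d)) (hz : z ∈ ψ) (hzB : z ∉ closedBall x t) :
    ρφ y + ρψ z < dist y z := by
  have hxy : dist x y ≤ s := by rwa [mem_closedBall, dist_comm] at hyB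
  have hxz : t < dist x z := by rw [mem_closedBall, dist_comm] at hzB; linarith [not_le.mp hzB]
  have htpos : (0:ℝ) < t := by linarith
  have hspos : (0:ℝ) < s := by linarith
  have hzx : z ≠ x := by
    intro h; rw [h, dist_self] at hxz; linarith
  -- bound for ρψ z
  obtain ⟨q, hq1, hq2⟩ := dfs_aux hzx t htpos.le
  have hq2' : dist z q = dist x z - t := by
    rw [hq2, abs_of_pos (by linarith)]
  have hqsph : q ∈ sphere x t := by rw [mem_sphere, dist_comm]; exact hq1
  obtain ⟨i, hqi⟩ := Set.mem_iUnion.mp (hcovψ hqsph)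
  obtain ⟨a, ha, b, hb, hab, ⟨haB, haO⟩, ⟨hbB, hbO⟩⟩ := hfenceψ i
  obtain ⟨c, hc, hcB, hcz⟩ : ∃ c ∈ ψ, c ∈ ball (yψ i) r ∧ c ≠ z := by
    by_cases hca : a = z
    · exact ⟨b, hb, hbB, fun h => hab (by rw [hca, h])⟩
    · exact ⟨a, ha, haB, hca⟩
  have hbound2 : ρψ z < dist x z - t + 2 * r := by
    have h1 : ρψ z ≤ dist z c := hρψD z hz c hc hcz
    have h2 : dist z c ≤ dist z q + dist q (yψ i) + dist (yψ i) c :=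
      dist_triangle4 z q (yψ i) c
    have h3 : dist q (yψ i) < r := mem_ball.mp hqi
    have h4 : dist (yψ i) c < r := by rw [dist_comm]; exact mem_ball.mp hcB
    linarith
  -- bound for ρφ y
  obtain ⟨p, hp1, hp2⟩ : ∃ p, dist x p = s ∧ dist y p ≤ s - dist x y := by
    by_cases hyx : y = x
    · obtain ⟨p, hp1, _⟩ := dfs_aux hzx s hspos.le
      exact ⟨p, hp1, by rw [hyx, hp1]; simp⟩
    · obtain ⟨p, hp1, hp2⟩ := dfs_aux hyx s hspos.le
      refine ⟨p, hp1, ?_⟩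
      rw [hp2, abs_of_nonpos (by linarith), neg_sub]
  have hpsph : p ∈ sphere x s := by rw [mem_sphere, dist_comm]; exact hp1
  obtain ⟨j, hpj⟩ := Set.mem_iUnion.mp (hcovφ hpsph)
  obtain ⟨a', ha', _, _, _, ⟨ha'B, ha'O⟩, _⟩ := hfenceφ j
  have ha'y : a' ≠ y := fun h => ha'O (h ▸ hyB)
  have hbound1 : ρφ y < s - dist x y + 2 * r := by
    have h1 : ρφ y ≤ dist y a' := hρφD y hy a' ha' ha'y
    have h2 : dist y a' ≤ dist y p + dist p (yφ j) + dist (yφ j) a' :=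
      dist_triangle4 y p (yφ j) a'
    have h3 : dist p (yφ j) < r := mem_ball.mp hpj
    have h4 : dist (yφ j) a' < r := by rw [dist_comm]; exact mem_ball.mp ha'B
    linarith
  have htri : dist x z ≤ dist x y + dist y z := dist_triangle x y z
  linarith
end

section
/- For the unit-intensity Poisson process Φ on R^d, for all x ∈ R^d and 0 < r with 2r < s: P(Φ does not contain a fence in the annulus at radius s around x with parameter r) ≤ k(s,r) · (1 + (b_d/2) r^d) · exp(−(b_d/2) r^d), where k(s,r) is the covering number of ∂B_s(x) by open r-balls. -/
open Metric MeasureTheory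

/-- `b_d`, the volume of the unit ball in `ℝ^d`. -/
noncomputable def bd (d : ℕ) : ℝ :=
  (volume (closedBall (0 : EuclideanSpace ℝ (Fin d)) 1)).toReal

/-- `Φ` is a unit-intensity Poisson point process on `ℝ^d` under `P`. -/
def IsPoissonPP {d : ℕ} {Ω : Type*} [MeasurableSpace Ω]
    (P : Measure Ω) (Φ : Ω → Set (EuclideanSpace ℝ (Fin d))) : Prop :=
  (∀ ω, ∀ K : Set (EuclideanSpace ℝ (Fin d)), IsCompact K → (Φ ω ∩ K).Finite) ∧
  ∀ (m : ℕ) (A : Fin m → Set (EuclideanSpace ℝ (Fin d))),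
    (∀ i, MeasurableSet (A i)) → (∀ i, volume (A i) < ⊤) →
    (Pairwise fun i j => Disjoint (A i) (A j)) →
    ∀ k : Fin m → ℕ,
      P {ω | ∀ i, (Φ ω ∩ A i).ncard = k i} =
        ∏ i, ENNReal.ofReal (Real.exp (-(volume (A i)).toReal) *
          (volume (A i)).toReal ^ (k i) / (Nat.factorial (k i)))

/-- `k(s,r)`: the covering number of a sphere of radius `s` in `ℝ^d` by open `r`-balls
centred on the sphere. -/
noncomputable def kcov (d : ℕ) (s r : ℝ) : ℕ :=
  sInf {k : ℕ | ∃ y : Fin k → EuclideanSpace ℝ (Fin d),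
    (∀ i, ‖y i‖ = s) ∧ sphere (0 : EuclideanSpace ℝ (Fin d)) s ⊆ ⋃ i, ball (y i) r}

section Aux

open RealInnerProductSpace

variable {d : ℕ}

/-- The open half of a ball determined by a hyperplane through its centre has exactly
half the volume of the ball. -/
lemma halfball_vol (hd : 0 < d) (y v : EuclideanSpace ℝ (Fin d)) (hv : v ≠ 0) {r : ℝ}
    (hr : 0 < r) :
    2 * volume (ball y r ∩ {z | 0 < ⟪z - y, v⟫}) =
      ENNReal.ofReal (r ^ d) * volume (ball (0 : EuclideanSpace ℝ (Fin d)) 1) := by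
  haveI : Nonempty (Fin d) := ⟨⟨0, hd⟩⟩
  set Hp : Set (EuclideanSpace ℝ (Fin d)) := {z | 0 < ⟪z - y, v⟫} with hHp
  set Hm : Set (EuclideanSpace ℝ (Fin d)) := {z | ⟪z - y, v⟫ < 0} with hHm
  set H0 : Set (EuclideanSpace ℝ (Fin d)) := {z | ⟪z - y, v⟫ = 0} with hH0
  have hcont : Continuous fun z : EuclideanSpace ℝ (Fin d) => ⟪z - y, v⟫ :=
    (continuous_id.sub continuous_const).inner continuous_const
  have hmp : MeasurableSet Hp := (isOpen_lt continuous_const hcont).measurableSet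
  have hmm : MeasurableSet Hm := (isOpen_lt hcont continuous_const).measurableSet
  have hm0 : MeasurableSet H0 := (isClosed_eq hcont continuous_const).measurableSet
  -- reflection
  have hrefl : (fun z => (2 : ℝ) • y - z) ⁻¹' (ball y r ∩ Hp) = ball y r ∩ Hm := by
    ext z
    have e1 : (2 : ℝ) • y - z - y = -(z - y) := by module
    simp only [Set.mem_preimage, Set.mem_inter_iff, mem_ball, dist_eq_norm, hHp, hHm,
      Set.mem_setOf_eq, e1, norm_neg, inner_neg_left]
    constructor <;> rintro ⟨h1, h2⟩ <;> exact ⟨by linarith [h1], by linarith⟩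
  have hvolm : volume (ball y r ∩ Hm) = volume (ball y r ∩ Hp) := by
    rw [← hrefl]
    exact (Measure.measurePreserving_sub_left volume ((2:ℝ) • y)).measure_preimage
      (measurableSet_ball.inter hmp).nullMeasurableSet
  have hvol0 : volume (ball y r ∩ H0) = 0 := by
    have hsub : H0 = (fun z => z + (-y)) ⁻¹'
        (LinearMap.ker (innerSL ℝ v).toLinearMap : Set (EuclideanSpace ℝ (Fin d))) := by
      ext z
      simp only [hH0, Set.mem_setOf_eq, Set.mem_preimage, SetLike.mem_coe, LinearMap.mem_ker,
        ContinuousLinearMap.coe_coe, innerSL_apply_apply]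
      rw [real_inner_comm, ← sub_eq_add_neg]
    have hker : volume ((LinearMap.ker (innerSL ℝ v).toLinearMap : Submodule ℝ (EuclideanSpace ℝ (Fin d))) :
        Set (EuclideanSpace ℝ (Fin d))) = 0 := by
      apply Measure.addHaar_submodule
      intro h
      have hv2 : ⟪v, v⟫ = 0 := by
        have := h ▸ Submodule.mem_top (R := ℝ) (x := v)
        simpa [LinearMap.mem_ker] using this
      exact hv (inner_self_eq_zero.mp hv2)
    refine measure_mono_null Set.inter_subset_right ?_
    rw [hsub, measure_preimage_add_right volume (-y) _, hker]
  have hsplit : volume (ball y r) = volume (ball y r ∩ Hp) + volume (ball y r ∩ Hm)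
      + volume (ball y r ∩ H0) := by
    have hun : ball y r = (ball y r ∩ Hp) ∪ ((ball y r ∩ Hm) ∪ (ball y r ∩ H0)) := by
      ext z
      simp only [Set.mem_union, Set.mem_inter_iff, hHp, hHm, hH0, Set.mem_setOf_eq]
      rcases lt_trichotomy (0 : ℝ) ⟪z - y, v⟫ with h | h | h <;> tauto
    nth_rewrite 1 [hun]
    rw [measure_union ?d1 ((measurableSet_ball.inter hmm).union (measurableSet_ball.inter hm0)),
      measure_union ?d2 (measurableSet_ball.inter hm0), add_assoc]
    case d1 =>
      rw [Set.disjoint_union_right]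
      constructor <;> refine Set.disjoint_left.2 fun z hz hz' => ?_
      · have h1 : 0 < ⟪z - y, v⟫ := hz.2
        have h2 : ⟪z - y, v⟫ < 0 := hz'.2
        linarith
      · have h1 : 0 < ⟪z - y, v⟫ := hz.2
        have h2 : ⟪z - y, v⟫ = 0 := hz'.2
        linarith
    case d2 =>
      refine Set.disjoint_left.2 fun z hz hz' => ?_
      have h1 : ⟪z - y, v⟫ < 0 := hz.2
      have h2 : ⟪z - y, v⟫ = 0 := hz'.2
      linarith
  have hball : volume (ball y r) =
      ENNReal.ofReal (r ^ d) * volume (ball (0 : EuclideanSpace ℝ (Fin d)) 1) := by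
    rw [Measure.addHaar_ball volume y hr.le, finrank_euclideanSpace_fin]
  rw [two_mul]
  nth_rewrite 2 [← hvolm]
  rw [← hball, hsplit, hvol0, add_zero]

/-- Lower bound on the volume of the region `B^o_r(y) \ B_s(x)` for `y ∈ ∂B_s(x)`. -/
lemma annulus_vol (hd : 0 < d) {x y : EuclideanSpace ℝ (Fin d)} {r s : ℝ}
    (hr : 0 < r) (hs : 0 < s) (hxy : dist x y = s) :
    ENNReal.ofReal (bd d / 2 * r ^ d) ≤ volume (ball y r \ closedBall x s) := by
  haveI : Nonempty (Fin d) := ⟨⟨0, hd⟩⟩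
  set v : EuclideanSpace ℝ (Fin d) := y - x with hv'
  have hnv : ‖v‖ = s := by rw [hv', ← dist_eq_norm, dist_comm]; exact hxy
  have hv : v ≠ 0 := by
    intro h
    rw [h, norm_zero] at hnv
    exact hs.ne hnv
  have hsubset : ball y r ∩ {z | 0 < ⟪z - y, v⟫} ⊆ ball y r \ closedBall x s := by
    rintro z ⟨hz1, hz2⟩
    refine ⟨hz1, ?_⟩
    have h2 : 0 < ⟪z - y, v⟫ := hz2
    have hzx : z - x = (z - y) + v := by rw [hv']; abel
    have hsq : ‖z - x‖ ^ 2 = ‖z - y‖ ^ 2 + 2 * ⟪z - y, v⟫ + ‖v‖ ^ 2 := by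
      rw [hzx]; exact norm_add_sq_real _ _
    have hgt : s ^ 2 < ‖z - x‖ ^ 2 := by
      rw [hsq, hnv]; nlinarith [sq_nonneg ‖z - y‖]
    have : s < ‖z - x‖ := by nlinarith [norm_nonneg (z - x)]
    simp only [mem_closedBall, dist_eq_norm, not_le]
    exact this
  have hkey := halfball_vol hd y v hv hr
  have hb1 : volume (ball (0 : EuclideanSpace ℝ (Fin d)) 1) = ENNReal.ofReal (bd d) := by
    rw [bd, ← Measure.addHaar_closedBall_eq_addHaar_ball,
      ENNReal.ofReal_toReal measure_closedBall_lt_top.ne]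
  have heq : (2 : ENNReal) * volume (ball y r ∩ {z | 0 < ⟪z - y, v⟫}) =
      2 * ENNReal.ofReal (bd d / 2 * r ^ d) := by
    rw [hkey, hb1, ← ENNReal.ofReal_mul (by positivity)]
    rw [show ((2 : ENNReal)) = ENNReal.ofReal (2 : ℝ) by simp, ← ENNReal.ofReal_mul (by norm_num)]
    congr 1
    have hbd : 0 ≤ bd d := ENNReal.toReal_nonneg
    ring
  have hAeq : volume (ball y r ∩ {z | 0 < ⟪z - y, v⟫}) = ENNReal.ofReal (bd d / 2 * r ^ d) :=
    (ENNReal.mul_right_inj (by norm_num) (by norm_num)).mp heq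
  calc ENNReal.ofReal (bd d / 2 * r ^ d) = volume (ball y r ∩ {z | 0 < ⟪z - y, v⟫}) := hAeq.symm
  _ ≤ volume (ball y r \ closedBall x s) := measure_mono hsubset

/-- `(1 + t) e^{-t}` is decreasing on `[0, ∞)`. -/
lemma one_add_mul_exp_neg_antitone {a b : ℝ} (ha : 0 ≤ a) (hab : a ≤ b) :
    (1 + b) * Real.exp (-b) ≤ (1 + a) * Real.exp (-a) := by
  have h1 : 1 + b ≤ (1 + a) * Real.exp (b - a) := by
    calc 1 + b ≤ (1 + a) * (1 + (b - a)) := by nlinarith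
    _ ≤ (1 + a) * Real.exp (b - a) := by
        have := Real.add_one_le_exp (b - a)
        nlinarith
  have h2 : (0:ℝ) < Real.exp (-b) := Real.exp_pos _
  calc (1 + b) * Real.exp (-b) ≤ (1 + a) * Real.exp (b - a) * Real.exp (-b) := by nlinarith
  _ = (1 + a) * Real.exp (-a) := by rw [mul_assoc, ← Real.exp_add]; ring_nf

/-- Bound on the probability that a single region contains at most one point. -/
lemma poisson_le_one_bound {d : ℕ} {Ω : Type*} [MeasurableSpace Ω]
    (P : Measure Ω) (Φ : Ω → Set (EuclideanSpace ℝ (Fin d))) (hΦ : IsPoissonPP P Φ)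
    {A : Set (EuclideanSpace ℝ (Fin d))} (hA : MeasurableSet A) (hfin : volume A < ⊤) :
    P {ω | (Φ ω ∩ A).ncard ≤ 1} ≤
      ENNReal.ofReal ((1 + (volume A).toReal) * Real.exp (-(volume A).toReal)) := by
  set lam : ℝ := (volume A).toReal with hlam
  have hlam0 : 0 ≤ lam := ENNReal.toReal_nonneg
  have h0 := hΦ.2 1 (fun _ => A) (fun _ => hA) (fun _ => hfin)
    (Subsingleton.pairwise) (fun _ => 0)
  have h1 := hΦ.2 1 (fun _ => A) (fun _ => hA) (fun _ => hfin)
    (Subsingleton.pairwise) (fun _ => 1)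
  simp only [Fin.forall_fin_one, Fin.prod_univ_one, pow_zero, pow_one, Nat.factorial_zero,
    Nat.factorial_one, Nat.cast_one, mul_one, div_one] at h0 h1
  have hsub : {ω | (Φ ω ∩ A).ncard ≤ 1} ⊆
      {ω | (Φ ω ∩ A).ncard = 0} ∪ {ω | (Φ ω ∩ A).ncard = 1} := by
    intro ω hω
    rcases Nat.le_one_iff_eq_zero_or_eq_one.mp hω with h | h
    · exact Or.inl h
    · exact Or.inr h
  calc P {ω | (Φ ω ∩ A).ncard ≤ 1}
      ≤ P ({ω | (Φ ω ∩ A).ncard = 0} ∪ {ω | (Φ ω ∩ A).ncard = 1}) := measure_mono hsub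
    _ ≤ P {ω | (Φ ω ∩ A).ncard = 0} + P {ω | (Φ ω ∩ A).ncard = 1} := measure_union_le _ _
    _ = ENNReal.ofReal (Real.exp (-lam)) + ENNReal.ofReal (Real.exp (-lam) * lam) := by
        rw [h0, h1]
    _ = ENNReal.ofReal ((1 + lam) * Real.exp (-lam)) := by
        rw [← ENNReal.ofReal_add (Real.exp_pos _).le (by positivity)]
        congr 1
        ring

end Aux

/-- **Probability of no fence.** For the unit-intensity Poisson process `Φ`, any centre
`x`, radii `0 < r` with `2r < s`, and any points `y_1, …, y_{k(s,r)}` on `∂B_s(x)` whose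
open `r`-balls cover `∂B_s(x)`, the probability that some region `B^o_r(y_i) \ B_s(x)`
contains fewer than two points of `Φ` is at most
`k(s,r) (1 + (b_d/2) r^d) exp(-(b_d/2) r^d)`. -/
theorem fence_probability {d : ℕ} (hd : 0 < d) {Ω : Type*} [MeasurableSpace Ω]
    (P : Measure Ω) [IsProbabilityMeasure P]
    (Φ : Ω → Set (EuclideanSpace ℝ (Fin d))) (hΦ : IsPoissonPP P Φ)
    (x : EuclideanSpace ℝ (Fin d)) (r s : ℝ) (hr : 0 < r) (hrs : 2 * r < s)
    (y : Fin (kcov d s r) → EuclideanSpace ℝ (Fin d))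
    (hy : ∀ i, dist x (y i) = s)
    (hcov : sphere x s ⊆ ⋃ i, ball (y i) r) :
    P {ω | ¬ ∀ i, 2 ≤ (Φ ω ∩ (ball (y i) r \ closedBall x s)).ncard}
      ≤ ENNReal.ofReal ((kcov d s r : ℝ) * (1 + bd d / 2 * r ^ d) *
          Real.exp (-(bd d / 2) * r ^ d)) := by
  have hs : 0 < s := lt_trans (by linarith) hrs
  set A : Fin (kcov d s r) → Set (EuclideanSpace ℝ (Fin d)) :=
    fun i => ball (y i) r \ closedBall x s with hA
  have hAm : ∀ i, MeasurableSet (A i) := fun i =>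
    measurableSet_ball.diff measurableSet_closedBall
  have hAfin : ∀ i, volume (A i) < ⊤ := fun i =>
    (measure_mono Set.diff_subset).trans_lt measure_ball_lt_top
  set mu : ℝ := bd d / 2 * r ^ d with hmu
  have hbd0 : 0 ≤ bd d := ENNReal.toReal_nonneg
  have hmu0 : 0 ≤ mu := by positivity
  have hmulam : ∀ i, mu ≤ (volume (A i)).toReal := by
    intro i
    have hlow : ENNReal.ofReal mu ≤ volume (A i) := annulus_vol hd hr hs (hy i)
    rw [← ENNReal.toReal_ofReal hmu0]
    exact ENNReal.toReal_mono (hAfin i).ne hlow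
  -- the union bound
  have hsubset : {ω | ¬ ∀ i, 2 ≤ (Φ ω ∩ A i).ncard} ⊆
      ⋃ i, {ω | (Φ ω ∩ A i).ncard ≤ 1} := by
    intro ω hω
    push_neg at hω
    obtain ⟨i, hi⟩ := hω
    exact Set.mem_iUnion.2 ⟨i, Nat.lt_succ_iff.mp hi⟩
  have hterm : ∀ i, P {ω | (Φ ω ∩ A i).ncard ≤ 1} ≤
      ENNReal.ofReal ((1 + mu) * Real.exp (-mu)) := by
    intro i
    refine (poisson_le_one_bound P Φ hΦ (hAm i) (hAfin i)).trans ?_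
    exact ENNReal.ofReal_le_ofReal (one_add_mul_exp_neg_antitone hmu0 (hmulam i))
  calc P {ω | ¬ ∀ i, 2 ≤ (Φ ω ∩ A i).ncard}
      ≤ P (⋃ i, {ω | (Φ ω ∩ A i).ncard ≤ 1}) := measure_mono hsubset
    _ ≤ ∑' i, P {ω | (Φ ω ∩ A i).ncard ≤ 1} := measure_iUnion_le _
    _ ≤ ∑' _i : Fin (kcov d s r), ENNReal.ofReal ((1 + mu) * Real.exp (-mu)) :=
        ENNReal.tsum_le_tsum hterm
    _ = (kcov d s r : ENNReal) * ENNReal.ofReal ((1 + mu) * Real.exp (-mu)) := by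
        rw [tsum_fintype]
        simp [Finset.sum_const, Finset.card_univ, nsmul_eq_mul]
    _ = ENNReal.ofReal ((kcov d s r : ℝ) * ((1 + mu) * Real.exp (-mu))) := by
        rw [ENNReal.ofReal_mul (Nat.cast_nonneg _), ENNReal.ofReal_natCast]
    _ ≤ ENNReal.ofReal ((kcov d s r : ℝ) * (1 + bd d / 2 * r ^ d) *
          Real.exp (-(bd d / 2) * r ^ d)) := by
        apply ENNReal.ofReal_le_ofReal
        apply le_of_eq
        rw [hmu]
        ring_nf
end

section
/- Binomial descending chain bound: With χ_{n,m} the binomial process of m uniform points on W_n (m ≤ 2n), x ∈ R^d, u > 0 and integer ℓ ≥ 1, the expected number of ℓ-tuples of distinct points x_1,...,x_ℓ of χ_{n,m} with u ≥ |x_1 − x| ≥ |x_2 − x_1| ≥ ... ≥ |x_ℓ − x_{ℓ−1}| is at most 2^ℓ (b_d u^d)^ℓ / ℓ!. -/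
open Metric MeasureTheory ProbabilityTheory
open scoped Pointwise
open scoped ENNReal

/-- The `i`-th increment of the chain `x, y_0, y_1, …` started at the base point `x`. -/
noncomputable def chainStepFrom {d ℓ : ℕ} (x : EuclideanSpace ℝ (Fin d))
    (y : Fin ℓ → EuclideanSpace ℝ (Fin d)) (i : Fin ℓ) : ℝ :=
  if i.val = 0 then dist (y i) x
  else dist (y i) (y ⟨i.val - 1, lt_of_le_of_lt (Nat.sub_le _ _) i.isLt⟩)

/-- The condition `u ≥ |y_1 - x| ≥ |y_2 - y_1| ≥ … ≥ |y_ℓ - y_{ℓ-1}|`. -/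
def chainCondFrom {d ℓ : ℕ} (x : EuclideanSpace ℝ (Fin d)) (u : ℝ)
    (y : Fin ℓ → EuclideanSpace ℝ (Fin d)) : Prop :=
  Antitone (chainStepFrom x y) ∧ ∀ i, chainStepFrom x y i ≤ u

lemma bd_nonneg (d : ℕ) : 0 ≤ bd d := ENNReal.toReal_nonneg

lemma moment_ball {d : ℕ} (hd : 0 < d) (p : ℕ) (z : EuclideanSpace ℝ (Fin d)) {r : ℝ}
    (hr : 0 ≤ r) :
    ∫⁻ y in closedBall z r, ENNReal.ofReal (dist y z ^ p) ∂volume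
      = ENNReal.ofReal ((d : ℝ) * bd d * (r ^ (p + d) / (p + d))) := by
  obtain ⟨e, rfl⟩ : ∃ e, d = e + 1 := ⟨d - 1, (Nat.succ_pred_eq_of_pos hd).symm⟩
  haveI : NeZero (e + 1) := ⟨hd.ne'⟩
  haveI : Nontrivial (EuclideanSpace ℝ (Fin (e + 1))) :=
    inferInstance
  set F : ℝ → ℝ := Set.indicator (Set.Icc 0 r) (fun s => s ^ p) with hF
  have key : ∀ w : EuclideanSpace ℝ (Fin (e + 1)),
      (closedBall w r).indicator (fun y => ENNReal.ofReal (dist y w ^ p))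
        = fun y => ENNReal.ofReal (F ‖y - w‖) := by
    intro w
    funext y
    by_cases hy : y ∈ closedBall w r
    · rw [Set.indicator_of_mem hy, hF, Set.indicator_of_mem, ← dist_eq_norm]
      exact ⟨norm_nonneg _, by rwa [← dist_eq_norm, ← mem_closedBall]⟩
    · rw [Set.indicator_of_notMem hy, hF, Set.indicator_of_notMem]
      · simp
      · intro hmem
        exact hy (by rw [mem_closedBall, dist_eq_norm]; exact hmem.2)
  have h1 : ∫⁻ y in closedBall z r, ENNReal.ofReal (dist y z ^ p) ∂volume
      = ∫⁻ y, ENNReal.ofReal (F ‖y - z‖) ∂volume := by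
    rw [← lintegral_indicator measurableSet_closedBall, key z]
  have h2 : ∫⁻ y, ENNReal.ofReal (F ‖y - z‖) ∂(volume : Measure (EuclideanSpace ℝ (Fin (e + 1))))
      = ∫⁻ y : EuclideanSpace ℝ (Fin (e + 1)), ENNReal.ofReal (F ‖y‖) ∂volume := by
    simpa [sub_eq_add_neg] using
      lintegral_add_right_eq_self (μ := (volume : Measure (EuclideanSpace ℝ (Fin (e + 1)))))
        (fun y => ENNReal.ofReal (F ‖y‖)) (-z)
  have hIndEq : (fun y : EuclideanSpace ℝ (Fin (e + 1)) => F ‖y‖)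
      = (closedBall (0 : EuclideanSpace ℝ (Fin (e + 1))) r).indicator (fun y => dist y 0 ^ p) := by
    funext y
    rw [hF]
    by_cases hy : y ∈ closedBall (0 : EuclideanSpace ℝ (Fin (e + 1))) r
    · rw [Set.indicator_of_mem hy, Set.indicator_of_mem (Set.mem_Icc.mpr
        ⟨norm_nonneg _, by simpa [dist_zero_right] using mem_closedBall.mp hy⟩), dist_zero_right]
    · rw [Set.indicator_of_notMem hy, Set.indicator_of_notMem]
      intro hmem
      exact hy (by simpa [mem_closedBall, dist_zero_right] using hmem.2)
  have hInt : Integrable (fun y : EuclideanSpace ℝ (Fin (e + 1)) => F ‖y‖) volume := by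
    rw [hIndEq]
    refine (IntegrableOn.integrable_indicator ?_ measurableSet_closedBall)
    exact ((continuous_dist.comp (continuous_id.prodMk continuous_const)).pow p).continuousOn.integrableOn_compact (isCompact_closedBall _ _)
  have hpos : 0 ≤ᵐ[volume] fun y : EuclideanSpace ℝ (Fin (e + 1)) => F ‖y‖ := by
    refine Filter.Eventually.of_forall fun y => ?_
    rw [hIndEq]
    exact Set.indicator_nonneg (fun t _ => pow_nonneg dist_nonneg _) _
  have h4 : ∫⁻ y, ENNReal.ofReal (F ‖y‖) ∂(volume : Measure (EuclideanSpace ℝ (Fin (e + 1))))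
      = ENNReal.ofReal (∫ y, F ‖y‖ ∂volume) :=
    (ofReal_integral_eq_lintegral_ofReal hInt hpos).symm
  have h3 : ∫ y, F ‖y‖ ∂(volume : Measure (EuclideanSpace ℝ (Fin (e + 1))))
      = ((e+1 : ℕ) : ℝ) * bd (e+1) * (r ^ (p + (e+1)) / ((p : ℝ) + ((e+1 : ℕ) : ℝ))) := by
    rw [integral_fun_norm_addHaar (volume : Measure (EuclideanSpace ℝ (Fin (e + 1)))) F]
    simp only [finrank_euclideanSpace_fin, smul_eq_mul, nsmul_eq_mul, Nat.add_sub_cancel]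
    have hind : ∀ y : ℝ, y ^ e * F y
        = Set.indicator (Set.Icc 0 r) (fun s => s ^ (e + p)) y := by
      intro y
      by_cases hy : y ∈ Set.Icc (0:ℝ) r
      · rw [hF, Set.indicator_of_mem hy, Set.indicator_of_mem hy, ← pow_add, Nat.add_comm e p]
      · rw [hF, Set.indicator_of_notMem hy, Set.indicator_of_notMem hy, mul_zero]
    rw [show (∫ y in Set.Ioi (0:ℝ), y ^ e * F y)
        = ∫ y in Set.Ioi (0:ℝ), Set.indicator (Set.Icc 0 r) (fun s => s ^ (e + p)) y
        from integral_congr_ae (Filter.Eventually.of_forall fun y => hind y)]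
    rw [setIntegral_indicator measurableSet_Icc]
    have hset : Set.Ioi (0:ℝ) ∩ Set.Icc 0 r = Set.Ioc 0 r := by
      ext t; constructor
      · rintro ⟨h1, h2, h3⟩; exact ⟨h1, h3⟩
      · rintro ⟨h1, h2⟩; exact ⟨h1, le_of_lt h1, h2⟩
    rw [hset, ← intervalIntegral.integral_of_le hr, integral_pow]
    rw [zero_pow (by omega : e + p + 1 ≠ 0)]
    have hd1 : e + p + 1 = p + (e + 1) := by omega
    rw [hd1]
    have hball : (volume (ball (0 : EuclideanSpace ℝ (Fin (e + 1))) 1)).toReal = bd (e+1) := by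
      rw [bd, Measure.addHaar_closedBall_eq_addHaar_ball]
    rw [measureReal_def, hball]
    push_cast
    have hne : (p : ℝ) + ((e : ℝ) + 1) ≠ 0 := by positivity
    field_simp
    ring
  rw [h1, h2, h4, h3]

lemma measurable_chainStepFrom {d k : ℕ} {α : Type*} [MeasurableSpace α]
    {z : α → EuclideanSpace ℝ (Fin d)} {y : α → Fin k → EuclideanSpace ℝ (Fin d)}
    (hz : Measurable z) (hy : Measurable y) (i : Fin k) :
    Measurable (fun a => chainStepFrom (z a) (y a) i) := by
  unfold chainStepFrom
  by_cases h : i.val = 0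
  · simp only [h, if_true]
    exact ((measurable_pi_apply i).comp hy).dist hz
  · simp only [h, if_false]
    exact ((measurable_pi_apply i).comp hy).dist ((measurable_pi_apply _).comp hy)

lemma measurableSet_chainCondFrom {d k : ℕ} {α : Type*} [MeasurableSpace α]
    {z : α → EuclideanSpace ℝ (Fin d)} {u : α → ℝ} {y : α → Fin k → EuclideanSpace ℝ (Fin d)}
    (hz : Measurable z) (hu : Measurable u) (hy : Measurable y) :
    MeasurableSet {a | chainCondFrom (z a) (u a) (y a)} := by
  have hstep := measurable_chainStepFrom hz hy
  have hEq : {a | chainCondFrom (z a) (u a) (y a)} =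
      (⋂ (i : Fin k) (j : Fin k),
        {a | i ≤ j → chainStepFrom (z a) (y a) j ≤ chainStepFrom (z a) (y a) i})
        ∩ ⋂ i : Fin k, {a | chainStepFrom (z a) (y a) i ≤ u a} := by
    ext a
    simp only [chainCondFrom, Set.mem_inter_iff, Set.mem_iInter, Set.mem_setOf_eq]
    exact ⟨fun ⟨h1, h2⟩ => ⟨fun i j hij => h1 hij, h2⟩,
      fun ⟨h1, h2⟩ => ⟨fun i j hij => h1 i j hij, h2⟩⟩
  rw [hEq]
  refine MeasurableSet.inter
    (MeasurableSet.iInter fun i => MeasurableSet.iInter fun j => ?_)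
    (MeasurableSet.iInter fun i => measurableSet_le (hstep i) hu)
  by_cases hij : i ≤ j
  · simp only [hij, true_implies]
    exact measurableSet_le (hstep j) (hstep i)
  · have : {a | i ≤ j → chainStepFrom (z a) (y a) j ≤ chainStepFrom (z a) (y a) i} = Set.univ := by
      ext a; simp [hij]
    rw [this]; exact MeasurableSet.univ

lemma chainStepFrom_zero {d k : ℕ} (z : EuclideanSpace ℝ (Fin d)) (y : Fin (k+1) → EuclideanSpace ℝ (Fin d)) :
    chainStepFrom z y 0 = dist (y 0) z := by
  simp [chainStepFrom]

lemma chainStepFrom_eq {d k : ℕ} (z : EuclideanSpace ℝ (Fin d))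
    (y : Fin k → EuclideanSpace ℝ (Fin d)) (i : Fin k) (hi : i.val ≠ 0) (j : Fin k)
    (hj : j.val = i.val - 1) : chainStepFrom z y i = dist (y i) (y j) := by
  unfold chainStepFrom
  rw [if_neg hi]
  exact congrArg (fun w => dist (y i) (y w)) (Fin.ext (by simp only [Fin.val_mk]; omega))

lemma chainStepFrom_succ {d k : ℕ} (z : EuclideanSpace ℝ (Fin d))
    (y : Fin (k+1) → EuclideanSpace ℝ (Fin d)) (j : Fin k) :
    chainStepFrom z y j.succ = chainStepFrom (y 0) (fun i => y i.succ) j := by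
  have hne : (j.succ : Fin (k+1)).val ≠ 0 := by simp [Fin.val_succ]
  rw [chainStepFrom_eq z y j.succ hne j.castSucc (by simp)]
  by_cases h : j.val = 0
  · unfold chainStepFrom
    rw [if_pos h]
    exact congrArg (fun w => dist (y j.succ) (y w)) (Fin.ext (by simp [h]))
  · rw [chainStepFrom_eq (y 0) (fun i => y i.succ) j h
      ⟨j.val - 1, Nat.lt_of_le_of_lt (Nat.sub_le _ _) j.isLt⟩ rfl]
    exact congrArg (fun w => dist (y j.succ) (y w))
      (Fin.ext (by simp [Fin.val_succ]; omega))

lemma chainCondFrom_succ_iff {d k : ℕ} (z : EuclideanSpace ℝ (Fin d)) (r : ℝ)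
    (y : Fin (k+1) → EuclideanSpace ℝ (Fin d)) :
    chainCondFrom z r y ↔
      dist (y 0) z ≤ r ∧ chainCondFrom (y 0) (dist (y 0) z) (fun i => y i.succ) := by
  constructor
  · rintro ⟨hA, hB⟩
    refine ⟨by rw [← chainStepFrom_zero z y]; exact hB 0, ⟨?_, ?_⟩⟩
    · intro i j hij
      rw [← chainStepFrom_succ, ← chainStepFrom_succ]
      exact hA (Fin.succ_le_succ_iff.mpr hij)
    · intro i
      rw [← chainStepFrom_succ, ← chainStepFrom_zero z y]
      exact hA (Fin.zero_le _)
  · rintro ⟨h0, hA, hB⟩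
    constructor
    · intro i j hij
      induction j using Fin.cases with
      | zero =>
        have : i = 0 := le_antisymm hij (Fin.zero_le _)
        rw [this]
      | succ j =>
        induction i using Fin.cases with
        | zero =>
          rw [chainStepFrom_zero, chainStepFrom_succ]
          exact hB j
        | succ i =>
          rw [chainStepFrom_succ, chainStepFrom_succ]
          exact hA (Fin.succ_le_succ_iff.mp hij)
    · intro i
      induction i using Fin.cases with
      | zero => rw [chainStepFrom_zero]; exact h0
      | succ i =>
        rw [chainStepFrom_succ]
        exact le_trans (hB i) h0

lemma chain_pi_bound {d : ℕ} (hd : 0 < d) (ν : Measure (EuclideanSpace ℝ (Fin d)))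
    [IsFiniteMeasure ν] (c : ℝ≥0∞) (hν : ν ≤ c • (volume : Measure (EuclideanSpace ℝ (Fin d))))
    (k : ℕ) (z : EuclideanSpace ℝ (Fin d)) (r : ℝ) (hr : 0 ≤ r) :
    Measure.pi (fun _ : Fin k => ν) {y | chainCondFrom z r y}
      ≤ (↑(Nat.factorial k))⁻¹ * (c ^ k * ENNReal.ofReal ((bd d * r ^ d) ^ k)) := by
  induction k generalizing z r with
  | zero =>
    refine le_trans (measure_mono (Set.subset_univ _)) ?_
    rw [Measure.pi_univ]
    simp
  | succ k ih =>
    have hmp := MeasureTheory.measurePreserving_piFinSuccAbove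
      (fun _ : Fin (k+1) => ν) 0
    set T : Set ((EuclideanSpace ℝ (Fin d)) × (Fin k → EuclideanSpace ℝ (Fin d))) :=
      {q | dist q.1 z ≤ r ∧ chainCondFrom q.1 (dist q.1 z) q.2} with hTdef
    have hT : MeasurableSet T := by
      refine MeasurableSet.inter ?_ ?_
      · exact measurableSet_le (measurable_fst.dist measurable_const) measurable_const
      · exact measurableSet_chainCondFrom measurable_fst
          (measurable_fst.dist measurable_const) measurable_snd
    have hSet : {y : Fin (k+1) → EuclideanSpace ℝ (Fin d) | chainCondFrom z r y}
        = (MeasurableEquiv.piFinSuccAbove (fun _ => EuclideanSpace ℝ (Fin d)) 0) ⁻¹' T := by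
      ext y
      have he : (MeasurableEquiv.piFinSuccAbove
          (fun _ : Fin (k+1) => EuclideanSpace ℝ (Fin d)) 0) y
          = (y 0, fun j => y (Fin.succAbove 0 j)) := rfl
      simp only [Set.mem_setOf_eq, Set.mem_preimage, he, hTdef, Fin.zero_succAbove]
      exact chainCondFrom_succ_iff z r y
    rw [hSet, hmp.measure_preimage hT.nullMeasurableSet, Measure.prod_apply hT]
    have hslice : ∀ a : EuclideanSpace ℝ (Fin d),
        Measure.pi (fun _ : Fin k => ν) (Prod.mk a ⁻¹' T)
          ≤ (closedBall z r).indicator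
            (fun a => (↑(Nat.factorial k))⁻¹ *
              (c ^ k * ENNReal.ofReal ((bd d * dist a z ^ d) ^ k))) a := by
      intro a
      by_cases ha : a ∈ closedBall z r
      · rw [Set.indicator_of_mem ha]
        have hpre : Prod.mk a ⁻¹' T = {w | chainCondFrom a (dist a z) w} := by
          ext w
          simp only [hTdef, Set.mem_preimage, Set.mem_setOf_eq]
          exact ⟨fun h => h.2, fun h => ⟨mem_closedBall.mp ha, h⟩⟩
        rw [hpre]
        exact ih a (dist a z) dist_nonneg
      · rw [Set.indicator_of_notMem ha]
        have hpre : Prod.mk a ⁻¹' T = ∅ := by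
          ext w
          simp only [hTdef, Set.mem_preimage, Set.mem_setOf_eq, Set.mem_empty_iff_false,
            iff_false, not_and]
          intro hle
          exact absurd (mem_closedBall.mpr hle) ha
        simp [hpre]
    calc ∫⁻ a, Measure.pi (fun _ : Fin k => ν) (Prod.mk a ⁻¹' T) ∂ν
        ≤ ∫⁻ a, (closedBall z r).indicator
            (fun a => (↑(Nat.factorial k))⁻¹ *
              (c ^ k * ENNReal.ofReal ((bd d * dist a z ^ d) ^ k))) a ∂ν :=
          lintegral_mono hslice
      _ = ∫⁻ a in closedBall z r, (↑(Nat.factorial k))⁻¹ *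
              (c ^ k * ENNReal.ofReal ((bd d * dist a z ^ d) ^ k)) ∂ν :=
          lintegral_indicator measurableSet_closedBall _
      _ ≤ ∫⁻ a in closedBall z r, (↑(Nat.factorial k))⁻¹ *
              (c ^ k * ENNReal.ofReal ((bd d * dist a z ^ d) ^ k)) ∂(c • volume) :=
          lintegral_mono' (Measure.restrict_mono le_rfl hν) le_rfl
      _ = c * ∫⁻ a in closedBall z r, (↑(Nat.factorial k))⁻¹ *
              (c ^ k * ENNReal.ofReal ((bd d * dist a z ^ d) ^ k)) ∂volume := by
          rw [Measure.restrict_smul, lintegral_smul_measure, smul_eq_mul]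
      _ = c * ((↑(Nat.factorial k))⁻¹ * (c ^ k * ENNReal.ofReal ((bd d) ^ k)) *
            ∫⁻ a in closedBall z r, ENNReal.ofReal (dist a z ^ (k * d)) ∂volume) := by
          congr 1
          rw [← lintegral_const_mul ((↑(Nat.factorial k))⁻¹ * (c ^ k * ENNReal.ofReal ((bd d) ^ k)))
            (by fun_prop : Measurable fun a : EuclideanSpace ℝ (Fin d) =>
              ENNReal.ofReal (dist a z ^ (k * d)))]
          refine lintegral_congr fun a => ?_
          rw [mul_pow, ENNReal.ofReal_mul (pow_nonneg (bd_nonneg d) k), ← pow_mul,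
            mul_comm d k, ENNReal.ofReal_pow dist_nonneg]
          ring
      _ ≤ (↑(Nat.factorial (k+1)))⁻¹ * (c ^ (k+1) * ENNReal.ofReal ((bd d * r ^ d) ^ (k+1))) := by
          rw [moment_ball hd (k * d) z hr]
          have e1 : ENNReal.ofReal ((bd d) ^ k) *
              ENNReal.ofReal ((d : ℝ) * bd d * (r ^ (k * d + d) / ((k * d : ℕ) + (d : ℕ) : ℝ)))
              = ENNReal.ofReal ((bd d * r ^ d) ^ (k+1)) * (((k+1 : ℕ)) : ℝ≥0∞)⁻¹ := by
            rw [← ENNReal.ofReal_mul (pow_nonneg (bd_nonneg d) k)]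
            have hre : (bd d) ^ k * ((d : ℝ) * bd d * (r ^ (k * d + d) / ((k * d : ℕ) + (d : ℕ) : ℝ)))
                = (bd d * r ^ d) ^ (k+1) * (((k+1 : ℕ) : ℝ))⁻¹ := by
              have hdne : (d : ℝ) ≠ 0 := Nat.cast_ne_zero.mpr hd.ne'
              have hkd : ((k * d : ℕ) + (d : ℕ) : ℝ) = ((k : ℝ) + 1) * d := by push_cast; ring
              have hexp : k * d + d = d * (k + 1) := by ring
              rw [hkd, mul_pow, ← pow_mul, hexp]
              push_cast
              field_simp
              ring
            rw [hre, ENNReal.ofReal_mul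
              (pow_nonneg (mul_nonneg (bd_nonneg d) (pow_nonneg hr d)) _), ENNReal.ofReal_inv_of_pos
              (by positivity), ENNReal.ofReal_natCast]
          apply le_of_eq
          calc c * ((↑(Nat.factorial k))⁻¹ * (c ^ k * ENNReal.ofReal ((bd d) ^ k)) *
                ENNReal.ofReal ((d : ℝ) * bd d * (r ^ (k * d + d) / ((k * d : ℕ) + (d : ℕ) : ℝ))))
              = (↑(Nat.factorial k))⁻¹ * (((k+1 : ℕ)) : ℝ≥0∞)⁻¹ *
                (c ^ (k+1) * ENNReal.ofReal ((bd d * r ^ d) ^ (k+1))) := by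
                rw [mul_assoc ((↑(Nat.factorial k))⁻¹) (c ^ k * ENNReal.ofReal ((bd d) ^ k))]
                rw [show (c ^ k * ENNReal.ofReal ((bd d) ^ k)) *
                    ENNReal.ofReal ((d : ℝ) * bd d * (r ^ (k * d + d) / ((k * d : ℕ) + (d : ℕ) : ℝ)))
                    = c ^ k * (ENNReal.ofReal ((bd d) ^ k) *
                      ENNReal.ofReal ((d : ℝ) * bd d * (r ^ (k * d + d) / ((k * d : ℕ) + (d : ℕ) : ℝ))))
                    from by ring]
                rw [e1, pow_succ]
                ring
            _ = (↑(Nat.factorial (k+1)))⁻¹ * (c ^ (k+1) * ENNReal.ofReal ((bd d * r ^ d) ^ (k+1))) := by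
                congr 1
                rw [Nat.factorial_succ, Nat.cast_mul, ENNReal.mul_inv (Or.inl (by simp))
                  (Or.inl (by simp [ENNReal.natCast_ne_top]))]
                ring

lemma map_tuple_eq_pi {d ℓ : ℕ} {Ω : Type*} [MeasurableSpace Ω] (P : Measure Ω)
    (g : ℕ → Ω → EuclideanSpace ℝ (Fin d)) (hg : ∀ i, Measurable (g i))
    (hindep : iIndepFun g P)
    (μ : Measure (EuclideanSpace ℝ (Fin d))) [IsFiniteMeasure μ]
    (hunif : ∀ i, Measure.map (g i) P = μ)
    (F : Fin ℓ → ℕ) (hF : Function.Injective F) :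
    Measure.map (fun ω (i : Fin ℓ) => g (F i) ω) P = Measure.pi (fun _ => μ) := by
  classical
  refine (Measure.pi_eq fun s hs => ?_).symm
  rw [Measure.map_apply (measurable_pi_lambda _ fun i => hg (F i)) (MeasurableSet.univ_pi hs)]
  have hpre : (fun ω (i : Fin ℓ) => g (F i) ω) ⁻¹' (Set.pi Set.univ s)
      = ⋂ i : Fin ℓ, g (F i) ⁻¹' s i := by
    ext ω; simp [Set.mem_pi]
  rw [hpre]
  set t : ℕ → Set (EuclideanSpace ℝ (Fin d)) :=
    fun j => if h : ∃ i, F i = j then s h.choose else Set.univ with ht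
  have htF : ∀ i : Fin ℓ, t (F i) = s i := by
    intro i
    have h : ∃ i', F i' = F i := ⟨i, rfl⟩
    rw [ht]
    simp only [dif_pos h]
    rw [hF h.choose_spec]
  have htmeas : ∀ j, j ∈ Finset.image F Finset.univ → MeasurableSet (t j) := by
    intro j _
    rw [ht]
    by_cases h : ∃ i, F i = j
    · simp only [dif_pos h]; exact hs _
    · simp only [dif_neg h]; exact MeasurableSet.univ
  have hinter : (⋂ i : Fin ℓ, g (F i) ⁻¹' s i)
      = ⋂ j ∈ Finset.image F Finset.univ, g j ⁻¹' t j := by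
    ext ω
    simp only [Set.mem_iInter, Finset.mem_image, Set.mem_preimage, Finset.mem_univ, true_and]
    constructor
    · rintro h j ⟨i, rfl⟩
      rw [htF i]; exact h i
    · intro h i
      have := h (F i) ⟨i, rfl⟩
      rwa [htF i] at this
  rw [hinter, hindep.measure_inter_preimage_eq_mul (Finset.image F Finset.univ) htmeas,
    Finset.prod_image (fun i _ j _ hij => hF hij)]
  refine Finset.prod_congr rfl fun i _ => ?_
  rw [htF i, ← hunif (F i), Measure.map_apply (hg (F i)) (hs i)]


/-- **Binomial descending chain bound.** Let `χ_{n,m}` consist of `m ≤ 2n` i.i.d. points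
uniform on `W_n := n^{1/d} • W`. For any `x ∈ ℝ^d`, `u > 0` and `ℓ ≥ 1`, the expected
number of `ℓ`-tuples of distinct points `x_1, …, x_ℓ` of `χ_{n,m}` with
`u ≥ |x_1 - x| ≥ |x_2 - x_1| ≥ … ≥ |x_ℓ - x_{ℓ-1}|` is at most `2^ℓ (b_d u^d)^ℓ / ℓ!`. -/
theorem binomial_chain_bound {d : ℕ} (hd : 0 < d)
    (W : Set (EuclideanSpace ℝ (Fin d))) (hWc : IsCompact W) (hWconv : Convex ℝ W)
    (hWvol : volume W = 1)
    (n m : ℕ) (hn : 0 < n) (hm : m ≤ 2 * n)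
    {Ω : Type*} [MeasurableSpace Ω] (P : Measure Ω) [IsProbabilityMeasure P]
    (X : ℕ → Ω → EuclideanSpace ℝ (Fin d))
    (hindep : iIndepFun X P)
    (hunif : ∀ i, Measure.map (X i) P =
      ((n : ENNReal))⁻¹ • volume.restrict (((n : ℝ) ^ ((1:ℝ)/d)) • W))
    (x : EuclideanSpace ℝ (Fin d)) (u : ℝ) (hu : 0 < u) (ℓ : ℕ) (hℓ : 1 ≤ ℓ) :
    ∫⁻ ω, ((Set.ncard {f : Fin ℓ → Fin m |
        Function.Injective (fun i => X (f i : ℕ) ω) ∧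
        chainCondFrom x u (fun i => X (f i : ℕ) ω)} : ℕ) : ENNReal) ∂P
      ≤ ENNReal.ofReal (2 ^ ℓ * (bd d * u ^ d) ^ ℓ / Nat.factorial ℓ) := by
  classical
  set μn : Measure (EuclideanSpace ℝ (Fin d)) :=
    ((n : ENNReal))⁻¹ • volume.restrict (((n : ℝ) ^ ((1:ℝ)/d)) • W) with hμn
  -- total mass of μn is 1
  have hWn : volume (((n : ℝ) ^ ((1:ℝ)/d)) • W) = n := by
    rw [Measure.addHaar_smul, hWvol, mul_one, finrank_euclideanSpace_fin,
      abs_of_nonneg (pow_nonneg (Real.rpow_nonneg (Nat.cast_nonneg n) _) d),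
      ← Real.rpow_natCast ((n:ℝ) ^ ((1:ℝ)/d)) d, ← Real.rpow_mul (Nat.cast_nonneg n), one_div,
      inv_mul_cancel₀ (by exact_mod_cast hd.ne' : (d:ℝ) ≠ 0), Real.rpow_one,
      ENNReal.ofReal_natCast]
  have hμuniv : μn Set.univ = 1 := by
    rw [hμn, Measure.smul_apply, Measure.restrict_apply MeasurableSet.univ, Set.univ_inter,
      hWn, smul_eq_mul, ENNReal.inv_mul_cancel (by exact_mod_cast hn.ne') (by simp)]
  haveI : IsProbabilityMeasure μn := ⟨hμuniv⟩
  have hμn_ne : μn ≠ 0 := by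
    intro h0
    rw [h0] at hμuniv
    simp at hμuniv
  -- measurable modifications
  have haem : ∀ i, AEMeasurable (X i) P := by
    intro i
    by_contra h
    exact hμn_ne ((hunif i).symm.trans (Measure.map_of_not_aemeasurable h))
  set g : ℕ → Ω → EuclideanSpace ℝ (Fin d) := fun i => (haem i).mk (X i) with hgdef
  have hgmeas : ∀ i, Measurable (g i) := fun i => (haem i).measurable_mk
  have hgae : ∀ i, X i =ᵐ[P] g i := fun i => (haem i).ae_eq_mk
  have hgunif : ∀ i, Measure.map (g i) P = μn := fun i => by
    rw [← Measure.map_congr (hgae i), hunif i]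
  have hgindep : iIndepFun g P := by
    rw [ProbabilityTheory.iIndepFun_iff_measure_inter_preimage_eq_mul] at hindep ⊢
    intro S sets hsets
    have hae : ∀ᵐ ω ∂P, ∀ i ∈ S, X i ω = g i ω :=
      (MeasureTheory.ae_ball_iff S.countable_toSet).mpr fun i _ => hgae i
    have h1 : ((⋂ i ∈ S, g i ⁻¹' sets i) : Set Ω) =ᵐ[P] ((⋂ i ∈ S, X i ⁻¹' sets i) : Set Ω) := by
      rw [Filter.eventuallyEq_set]
      filter_upwards [hae] with ω hω
      simp only [Set.mem_iInter, Set.mem_preimage]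
      exact ⟨fun h i hi => (hω i hi) ▸ h i hi, fun h i hi => (hω i hi).symm ▸ h i hi⟩
    rw [measure_congr h1, hindep S hsets]
    exact Finset.prod_congr rfl fun i hi => measure_congr (by
      rw [Filter.eventuallyEq_set]
      filter_upwards [hgae i] with ω hω
      simp only [Set.mem_preimage, hω])
  -- the chain set and events
  set chainSet : Set (Fin ℓ → EuclideanSpace ℝ (Fin d)) := {y | chainCondFrom x u y} with hcs
  have hCSmeas : MeasurableSet chainSet :=
    measurableSet_chainCondFrom (z := fun _ => x) (u := fun _ => u)
      (y := id) measurable_const measurable_const measurable_id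
  set C : (Fin ℓ → Fin m) → Set Ω :=
    fun f => (fun ω (i : Fin ℓ) => g (f i : ℕ) ω) ⁻¹' chainSet with hCdef
  have hCmeas : ∀ f, MeasurableSet (C f) := fun f =>
    (measurable_pi_lambda _ fun i => hgmeas (f i : ℕ)) hCSmeas
  -- probability bound for each injective f
  set B : ℝ≥0∞ := (↑(Nat.factorial ℓ))⁻¹ *
    (((n : ℝ≥0∞))⁻¹ ^ ℓ * ENNReal.ofReal ((bd d * u ^ d) ^ ℓ)) with hBdef
  have hνle : μn ≤ ((n : ℝ≥0∞))⁻¹ • (volume : Measure (EuclideanSpace ℝ (Fin d))) := by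
    intro s
    rw [hμn, Measure.smul_apply, Measure.smul_apply, smul_eq_mul, smul_eq_mul]
    exact mul_le_mul_right (Measure.restrict_le_self _) _
  have hPC : ∀ f : Fin ℓ → Fin m, Function.Injective f → P (C f) ≤ B := by
    intro f hf
    have hFinj : Function.Injective (fun i : Fin ℓ => (f i : ℕ)) :=
      fun i j hij => hf (Fin.val_injective hij)
    have hmap := map_tuple_eq_pi P g hgmeas hgindep μn hgunif (fun i => (f i : ℕ)) hFinj
    have : P (C f) = Measure.pi (fun _ : Fin ℓ => μn) chainSet := by
      rw [hCdef, ← Measure.map_apply (measurable_pi_lambda _ fun i => hgmeas (f i : ℕ)) hCSmeas,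
        hmap]
    rw [this, hBdef]
    exact chain_pi_bound hd μn _ hνle ℓ x u hu.le
  -- pointwise counting bound
  have hcount : ∀ ω, ((Set.ncard {f : Fin ℓ → Fin m |
        Function.Injective (fun i => g (f i : ℕ) ω) ∧
        chainCondFrom x u (fun i => g (f i : ℕ) ω)} : ℕ) : ℝ≥0∞)
      ≤ ∑ f ∈ Finset.univ.filter (fun f : Fin ℓ → Fin m => Function.Injective f),
          (C f).indicator (fun _ => (1:ℝ≥0∞)) ω := by
    intro ω
    have h1 : Set.ncard {f : Fin ℓ → Fin m |
        Function.Injective (fun i => g (f i : ℕ) ω) ∧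
        chainCondFrom x u (fun i => g (f i : ℕ) ω)}
        ≤ ((Finset.univ.filter (fun f : Fin ℓ → Fin m => Function.Injective f)).filter
            (fun f => ω ∈ C f)).card := by
      rw [← Set.ncard_coe_finset]
      refine Set.ncard_le_ncard ?_ (Set.toFinite _)
      rintro f ⟨hfinj, hfchain⟩
      refine Finset.mem_coe.mpr (Finset.mem_filter.mpr ⟨Finset.mem_filter.mpr
        ⟨Finset.mem_univ _, fun i j hij => hfinj (by simp only [hij])⟩, hfchain⟩)
    refine le_trans (Nat.cast_le.mpr h1) ?_
    rw [Finset.card_filter, Nat.cast_sum]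
    refine le_of_eq (Finset.sum_congr rfl fun f _ => ?_)
    by_cases h : ω ∈ C f
    · simp [h]
    · simp [h]
  -- assemble
  have hae2 : ∀ᵐ ω ∂P, ∀ i : ℕ, X i ω = g i ω := MeasureTheory.ae_all_iff.mpr hgae
  have hcongr : ∫⁻ ω, ((Set.ncard {f : Fin ℓ → Fin m |
        Function.Injective (fun i => X (f i : ℕ) ω) ∧
        chainCondFrom x u (fun i => X (f i : ℕ) ω)} : ℕ) : ENNReal) ∂P
      = ∫⁻ ω, ((Set.ncard {f : Fin ℓ → Fin m |
        Function.Injective (fun i => g (f i : ℕ) ω) ∧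
        chainCondFrom x u (fun i => g (f i : ℕ) ω)} : ℕ) : ENNReal) ∂P := by
    refine lintegral_congr_ae ?_
    filter_upwards [hae2] with ω hω
    congr 2
    ext f
    have : (fun i : Fin ℓ => X (f i : ℕ) ω) = fun i => g (f i : ℕ) ω :=
      funext fun i => hω (f i : ℕ)
    rw [Set.mem_setOf_eq, Set.mem_setOf_eq, this]
  rw [hcongr]
  calc ∫⁻ ω, ((Set.ncard {f : Fin ℓ → Fin m |
        Function.Injective (fun i => g (f i : ℕ) ω) ∧
        chainCondFrom x u (fun i => g (f i : ℕ) ω)} : ℕ) : ENNReal) ∂P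
      ≤ ∫⁻ ω, ∑ f ∈ Finset.univ.filter (fun f : Fin ℓ → Fin m => Function.Injective f),
          (C f).indicator (fun _ => (1:ℝ≥0∞)) ω ∂P := lintegral_mono hcount
    _ = ∑ f ∈ Finset.univ.filter (fun f : Fin ℓ → Fin m => Function.Injective f),
          ∫⁻ ω, (C f).indicator (fun _ => (1:ℝ≥0∞)) ω ∂P :=
        lintegral_finset_sum _ (fun f _ => (measurable_const.indicator (hCmeas f)))
    _ = ∑ f ∈ Finset.univ.filter (fun f : Fin ℓ → Fin m => Function.Injective f), P (C f) := by
        refine Finset.sum_congr rfl fun f _ => ?_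
        rw [lintegral_indicator (hCmeas f), setLIntegral_const, one_mul]
    _ ≤ ∑ f ∈ Finset.univ.filter (fun f : Fin ℓ → Fin m => Function.Injective f), B := by
        refine Finset.sum_le_sum fun f hf => ?_
        exact hPC f (by simpa using (Finset.mem_filter.mp hf).2)
    _ = ((Finset.univ.filter (fun f : Fin ℓ → Fin m => Function.Injective f)).card : ℝ≥0∞) * B := by
        rw [Finset.sum_const, nsmul_eq_mul]
    _ ≤ ((m : ℝ≥0∞)) ^ ℓ * B := by
        refine mul_le_mul_left ?_ _
        refine le_trans (Nat.cast_le.mpr (Finset.card_filter_le _ _)) ?_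
        rw [Finset.card_univ]
        rw [Fintype.card_fun]
        simp
    _ ≤ ENNReal.ofReal (2 ^ ℓ * (bd d * u ^ d) ^ ℓ / Nat.factorial ℓ) := by
        have hmn : (m : ℝ≥0∞) * ((n : ℝ≥0∞))⁻¹ ≤ 2 := by
          have h1 : (m : ℝ≥0∞) ≤ 2 * n := by
            rw [show ((2:ℝ≥0∞) * n) = ((2 * n : ℕ) : ℝ≥0∞) from by push_cast; ring]
            exact_mod_cast hm
          calc (m : ℝ≥0∞) * ((n : ℝ≥0∞))⁻¹ ≤ (2 * n) * ((n : ℝ≥0∞))⁻¹ :=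
              mul_le_mul_left h1 _
            _ = 2 * ((n : ℝ≥0∞) * ((n : ℝ≥0∞))⁻¹) := by ring
            _ = 2 := by
                rw [ENNReal.mul_inv_cancel (by exact_mod_cast hn.ne') (by simp), mul_one]
        have hRHS : ENNReal.ofReal (2 ^ ℓ * (bd d * u ^ d) ^ ℓ / Nat.factorial ℓ)
            = (↑(Nat.factorial ℓ) : ℝ≥0∞)⁻¹ *
              ((2:ℝ≥0∞) ^ ℓ * ENNReal.ofReal ((bd d * u ^ d) ^ ℓ)) := by
          rw [ENNReal.ofReal_div_of_pos (by exact_mod_cast Nat.factorial_pos ℓ),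
            ENNReal.ofReal_mul (by positivity), ENNReal.ofReal_pow (by norm_num : (0:ℝ) ≤ 2),
            ENNReal.ofReal_ofNat, ENNReal.ofReal_natCast, div_eq_mul_inv]
          ring
        calc ((m : ℝ≥0∞)) ^ ℓ * B
            = (↑(Nat.factorial ℓ) : ℝ≥0∞)⁻¹ *
              (((m : ℝ≥0∞) * ((n : ℝ≥0∞))⁻¹) ^ ℓ * ENNReal.ofReal ((bd d * u ^ d) ^ ℓ)) := by
              rw [hBdef, mul_pow]
              ring
          _ ≤ (↑(Nat.factorial ℓ) : ℝ≥0∞)⁻¹ *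
              ((2:ℝ≥0∞) ^ ℓ * ENNReal.ofReal ((bd d * u ^ d) ^ ℓ)) := by
              gcongr
          _ = ENNReal.ofReal (2 ^ ℓ * (bd d * u ^ d) ^ ℓ / Nat.factorial ℓ) := hRHS.symm
end

section
/- Directed-path structure lemma: Let G be a finite directed graph in which every vertex in a distinguished subset S has out-degree exactly 1. Then any path in the underlying undirected graph that starts at a vertex of S and has all vertices except possibly the last one in S, when orientations of its edges are taken into account, consists of a (possibly empty) forward-directed segment followed by a (possibly empty) backward-directed segment; i.e. the path can reverse direction at most once. -/
/-- **Directed-path structure lemma.**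
Let `G` be a finite directed graph in which every vertex of a distinguished set `S` has
out-degree exactly one. Let `v_0, v_1, …, v_k` be a path in the underlying undirected
graph (distinct vertices; for each `i` either `(v_i, v_{i+1})` or `(v_{i+1}, v_i)` is a
directed edge) starting at a vertex of `S` and with all vertices except possibly the
last in `S`. Then there is `j ≤ k` such that `(v_i, v_{i+1})` is a directed edge for all
`i < j` and `(v_{i+1}, v_i)` is a directed edge for all `i ≥ j`: the path can reverse
direction at most once. -/
theorem directed_path_reverses_once {V : Type*} [Fintype V]
    (Adj : V → V → Prop) (S : Set V)
    (hout : ∀ v ∈ S, ∃! w, Adj v w)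
    (k : ℕ) (v : Fin (k + 1) → V) (hinj : Function.Injective v)
    (hpath : ∀ i : Fin k, Adj (v i.castSucc) (v i.succ) ∨ Adj (v i.succ) (v i.castSucc))
    (hstart : v 0 ∈ S)
    (hS : ∀ i : Fin (k + 1), i ≠ Fin.last k → v i ∈ S) :
    ∃ j ≤ k, ∀ i : Fin k,
      ((i : ℕ) < j → Adj (v i.castSucc) (v i.succ)) ∧
      (j ≤ (i : ℕ) → Adj (v i.succ) (v i.castSucc)) := by
  
  classical
  by_cases hB : ∃ i : Fin k, Adj (v i.succ) (v i.castSucc)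
  · set T : Set ℕ := {n | ∃ h : n < k, Adj (v (⟨n, h⟩ : Fin k).succ) (v (⟨n, h⟩ : Fin k).castSucc)} with hT
    have hTne : T.Nonempty := by
      obtain ⟨i, hi⟩ := hB
      exact ⟨i.1, i.2, by simpa using hi⟩
    set j := sInf T with hj
    obtain ⟨hjk, hjB⟩ : j ∈ T := Nat.sInf_mem hTne
    have prop : ∀ n (hn : n < k) (hn1 : n + 1 < k),
        Adj (v (⟨n, hn⟩ : Fin k).succ) (v (⟨n, hn⟩ : Fin k).castSucc) →
        Adj (v (⟨n + 1, hn1⟩ : Fin k).succ) (v (⟨n + 1, hn1⟩ : Fin k).castSucc) := by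
      intro n hn hn1 hb
      rcases hpath ⟨n + 1, hn1⟩ with hf | hb'
      · exfalso
        have hcast : (⟨n + 1, hn1⟩ : Fin k).castSucc = (⟨n, hn⟩ : Fin k).succ := by
          ext; simp
        rw [hcast] at hf
        have hmem : v ((⟨n, hn⟩ : Fin k).succ) ∈ S := by
          apply hS
          simp [Fin.ext_iff]
          omega
        obtain ⟨w, hw, huniq⟩ := hout _ hmem
        have h1 : v (⟨n, hn⟩ : Fin k).castSucc = v (⟨n + 1, hn1⟩ : Fin k).succ := by
          rw [huniq _ hb, huniq _ hf]
        have := hinj h1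
        simp [Fin.ext_iff] at this; omega
      · exact hb'
    have back : ∀ n, ∀ hn : n < k, j ≤ n →
        Adj (v (⟨n, hn⟩ : Fin k).succ) (v (⟨n, hn⟩ : Fin k).castSucc) := by
      intro n
      induction n with
      | zero =>
        intro hn hle
        have hj0 : j = 0 := Nat.le_zero.mp hle
        have : (⟨0, hn⟩ : Fin k) = ⟨j, hjk⟩ := Fin.ext (by simp [hj0])
        rw [this]; exact hjB
      | succ m ih =>
        intro hn hle
        rcases Nat.lt_or_ge j (m + 1) with h | h
        · exact prop m (by omega) hn (ih (by omega) (by omega))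
        · have : (⟨m + 1, hn⟩ : Fin k) = ⟨j, hjk⟩ := Fin.ext (by simp; omega)
          rw [this]; exact hjB
    refine ⟨j, le_of_lt hjk, fun i => ⟨fun hlt => ?_, fun hge => ?_⟩⟩
    · rcases hpath i with hf | hb
      · exact hf
      · exfalso
        have : (i : ℕ) ∈ T := ⟨i.2, by simpa using hb⟩
        exact absurd (Nat.sInf_le this) (by omega)
    · have := back i.1 i.2 hge
      simpa using this
  · refine ⟨k, le_refl _, fun i => ⟨fun _ => ?_, fun h => absurd i.isLt (not_lt.mpr h)⟩⟩
    rcases hpath i with hf | hb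
    · exact hf
    · exact absurd ⟨i, hb⟩ hB
end
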